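/- For all (x,y), (x′,y′) ∈ Δ_m×Δ_n: (1) the limit defining Df_R(x,y,x′,y′) exists and equals max_{S_R(y)}(Ry′) − x′ᵀRy − xᵀRy′ + xᵀRy − f_R(x,y); (2) the limit defining Df_C(x,y,x′,y′) exists and equals max_{S_C(x)}(Cᵀx′) − x′ᵀCy − xᵀCy′ + xᵀCy − f_C(x,y); (3) if f_R(x,y) = f_C(x,y), the limit defining Df(x,y,x′,y′) exists and equals max{Df_R(x,y,x′,y′), Df_C(x,y,x′,y′)}. -/
import Mathlib


open scoped BigOperators Classical
open Matrix Filter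

noncomputable section

namespace TS

/-- The probability simplex in `ℝ^k`. -/
def Δ (k : ℕ) : Set (Fin k → ℝ) := {x | (∀ i, 0 ≤ x i) ∧ ∑ i, x i = 1}

/-- Maximum entry of a vector. -/
def vmax {k : ℕ} (u : Fin k → ℝ) : ℝ := ⨆ i, u i

/-- Maximum entry of a vector over an index set. -/
def vmaxOn {k : ℕ} (S : Set (Fin k)) (u : Fin k → ℝ) : ℝ := ⨆ i ∈ S, u i

/-- The support of a vector: indices with positive entries. -/
def supp {k : ℕ} (u : Fin k → ℝ) : Set (Fin k) := {i | 0 < u i}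

/-- The set of indices where `u` attains its maximum entry. -/
def suppmax {k : ℕ} (u : Fin k → ℝ) : Set (Fin k) := {i | ∀ j, u j ≤ u i}

/-- The set of indices where `u` attains its minimum entry. -/
def suppmin {k : ℕ} (u : Fin k → ℝ) : Set (Fin k) := {i | ∀ j, u i ≤ u j}

variable {m n : ℕ}

/-- `f_R(x,y) = max(Ry) − xᵀRy`. -/
def fR (R : Matrix (Fin m) (Fin n) ℝ) (x : Fin m → ℝ) (y : Fin n → ℝ) : ℝ :=
  vmax (R.mulVec y) - x ⬝ᵥ R.mulVec y

/-- `f_C(x,y) = max(Cᵀx) − xᵀCy`. -/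
def fC (C : Matrix (Fin m) (Fin n) ℝ) (x : Fin m → ℝ) (y : Fin n → ℝ) : ℝ :=
  vmax (Matrix.vecMul x C) - x ⬝ᵥ C.mulVec y

/-- `f(x,y) = max{f_R(x,y), f_C(x,y)}`. -/
def fNE (R C : Matrix (Fin m) (Fin n) ℝ) (x : Fin m → ℝ) (y : Fin n → ℝ) : ℝ :=
  max (fR R x y) (fC C x y)

/-- `S_R(y) = suppmax(Ry)`. -/
def SR (R : Matrix (Fin m) (Fin n) ℝ) (y : Fin n → ℝ) : Set (Fin m) := suppmax (R.mulVec y)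

/-- `S_C(x) = suppmax(Cᵀx)`. -/
def SC (C : Matrix (Fin m) (Fin n) ℝ) (x : Fin m → ℝ) : Set (Fin n) := suppmax (Matrix.vecMul x C)

/-- `g` has right (one-sided) derivative `d` at `0`: `lim_{θ→0⁺} (g θ − g 0)/θ = d`. -/
def HasPosDeriv (g : ℝ → ℝ) (d : ℝ) : Prop :=
  Tendsto (fun θ : ℝ => (g θ - g 0) / θ) (nhdsWithin 0 (Set.Ioi 0)) (nhds d)

/-- `(x,y)` is a stationary point: for every `(x',y')` in the product simplex, the scaled
directional derivative `Df(x,y,x',y')` of `f` exists and is nonnegative. -/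
def IsStationary (R C : Matrix (Fin m) (Fin n) ℝ) (x : Fin m → ℝ) (y : Fin n → ℝ) : Prop :=
  ∀ x' ∈ Δ m, ∀ y' ∈ Δ n, ∃ d : ℝ,
    HasPosDeriv (fun θ : ℝ => fNE R C (x + θ • (x' - x)) (y + θ • (y' - y))) d ∧ 0 ≤ d

/-- The function `T(x,y,x',y',ρ,w,z)`. -/
def Tfun (R C : Matrix (Fin m) (Fin n) ℝ) (x : Fin m → ℝ) (y : Fin n → ℝ)
    (x' : Fin m → ℝ) (y' : Fin n → ℝ) (ρ : ℝ) (w : Fin m → ℝ) (z : Fin n → ℝ) : ℝ :=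
  ρ * (w ⬝ᵥ R.mulVec y' - x ⬝ᵥ R.mulVec y' - x' ⬝ᵥ R.mulVec y + x ⬝ᵥ R.mulVec y)
    + (1 - ρ) * (x' ⬝ᵥ C.mulVec z - x ⬝ᵥ C.mulVec y' - x' ⬝ᵥ C.mulVec y + x ⬝ᵥ C.mulVec y)

/-- Feasibility for the tuple `(ρ,w,z)`: `ρ ∈ [0,1]`, `w ∈ Δ_m` with `supp w ⊆ S_R(y)`,
`z ∈ Δ_n` with `supp z ⊆ S_C(x)`. -/
def dualFeasible (R C : Matrix (Fin m) (Fin n) ℝ) (x : Fin m → ℝ) (y : Fin n → ℝ)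
    (ρ : ℝ) (w : Fin m → ℝ) (z : Fin n → ℝ) : Prop :=
  ρ ∈ Set.Icc (0:ℝ) 1 ∧ w ∈ Δ m ∧ supp w ⊆ SR R y ∧ z ∈ Δ n ∧ supp z ⊆ SC C x

/-- `max_{ρ,w,z} T(x,y,x',y',ρ,w,z)` over feasible `(ρ,w,z)`. -/
def innerMax (R C : Matrix (Fin m) (Fin n) ℝ) (x : Fin m → ℝ) (y : Fin n → ℝ)
    (x' : Fin m → ℝ) (y' : Fin n → ℝ) : ℝ :=
  sSup {t : ℝ | ∃ ρ w z, dualFeasible R C x y ρ w z ∧ t = Tfun R C x y x' y' ρ w z}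

/-- `V(x,y) = min_{(x',y') ∈ Δ_m×Δ_n} max_{ρ,w,z} T(x,y,x',y',ρ,w,z)`. -/
def Vval (R C : Matrix (Fin m) (Fin n) ℝ) (x : Fin m → ℝ) (y : Fin n → ℝ) : ℝ :=
  sInf {t : ℝ | ∃ x' ∈ Δ m, ∃ y' ∈ Δ n, t = innerMax R C x y x' y'}

/-- `min_{(x',y') ∈ Δ_m×Δ_n} T(x,y,x',y',ρ,w,z)`. -/
def innerMin (R C : Matrix (Fin m) (Fin n) ℝ) (x : Fin m → ℝ) (y : Fin n → ℝ)
    (ρ : ℝ) (w : Fin m → ℝ) (z : Fin n → ℝ) : ℝ :=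
  sInf {t : ℝ | ∃ x' ∈ Δ m, ∃ y' ∈ Δ n, t = Tfun R C x y x' y' ρ w z}

/-- `(ρ,w,z)` is a dual solution at `(x,y)`. -/
def IsDualSolution (R C : Matrix (Fin m) (Fin n) ℝ) (x : Fin m → ℝ) (y : Fin n → ℝ)
    (ρ : ℝ) (w : Fin m → ℝ) (z : Fin n → ℝ) : Prop :=
  dualFeasible R C x y ρ w z ∧ Vval R C x y = innerMin R C x y ρ w z

/-- `(x,y)` is an `ε`-approximate Nash equilibrium. -/
def IsEpsNash (R C : Matrix (Fin m) (Fin n) ℝ) (x : Fin m → ℝ) (y : Fin n → ℝ) (ε : ℝ) : Prop :=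
  (∀ x' ∈ Δ m, x' ⬝ᵥ R.mulVec y ≤ x ⬝ᵥ R.mulVec y + ε) ∧
  (∀ y' ∈ Δ n, x ⬝ᵥ C.mulVec y' ≤ x ⬝ᵥ C.mulVec y + ε)

/-- A Nash equilibrium is a `0`-approximate Nash equilibrium. -/
def IsNash (R C : Matrix (Fin m) (Fin n) ℝ) (x : Fin m → ℝ) (y : Fin n → ℝ) : Prop :=
  IsEpsNash R C x y 0

/-- `λ* = (w*−x*)ᵀRz*`. -/
def lamStar (R : Matrix (Fin m) (Fin n) ℝ) (xs ws : Fin m → ℝ) (zs : Fin n → ℝ) : ℝ :=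
  (ws - xs) ⬝ᵥ R.mulVec zs

/-- `μ* = w*ᵀC(z*−y*)`. -/
def muStar (C : Matrix (Fin m) (Fin n) ℝ) (ws : Fin m → ℝ) (ys zs : Fin n → ℝ) : ℝ :=
  ws ⬝ᵥ C.mulVec (zs - ys)

/-- `p* = f_R(x*,z*)/(f_R(x*,z*)+f_C(w*,z*)−f_R(w*,z*))` (`= 0` if the denominator is `0`,
by the real-division-by-zero convention). -/
def pstar (R C : Matrix (Fin m) (Fin n) ℝ) (xs ws : Fin m → ℝ) (zs : Fin n → ℝ) : ℝ :=
  fR R xs zs / (fR R xs zs + fC C ws zs - fR R ws zs)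

/-- `q* = f_C(w*,y*)/(f_C(w*,y*)+f_R(w*,z*)−f_C(w*,z*))` (`= 0` if the denominator is `0`). -/
def qstar (R C : Matrix (Fin m) (Fin n) ℝ) (ws : Fin m → ℝ) (ys zs : Fin n → ℝ) : ℝ :=
  fC C ws ys / (fC C ws ys + fR R ws zs - fC C ws zs)

/-- The adjusted pair `(ũ,ṽ)` of Method 3. -/
def tildeUV (R C : Matrix (Fin m) (Fin n) ℝ) (xs : Fin m → ℝ) (ys : Fin n → ℝ)
    (ws : Fin m → ℝ) (zs : Fin n → ℝ) : (Fin m → ℝ) × (Fin n → ℝ) :=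
  if fR R ws zs ≤ fC C ws zs then
    (pstar R C xs ws zs • ws + (1 - pstar R C xs ws zs) • xs, zs)
  else
    (ws, qstar R C ws ys zs • zs + (1 - qstar R C ws ys zs) • ys)

section Aux

lemma bddAboveRange {k : ℕ} (u : Fin k → ℝ) : BddAbove (Set.range u) :=
  (Set.finite_range u).bddAbove

lemma le_vmax {k : ℕ} (u : Fin (k+1) → ℝ) (i : Fin (k+1)) : u i ≤ vmax u :=
  le_ciSup (bddAboveRange u) i

lemma vmax_spec {k : ℕ} (u : Fin (k+1) → ℝ) : ∃ i, (∀ j, u j ≤ u i) ∧ vmax u = u i := by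
  obtain ⟨i, hi⟩ := Finite.exists_max u
  exact ⟨i, hi, le_antisymm (ciSup_le hi) (le_vmax u i)⟩

lemma suppmax_eq_vmax {k : ℕ} {u : Fin (k+1) → ℝ} {i : Fin (k+1)} (h : i ∈ suppmax u) :
    u i = vmax u := by
  obtain ⟨j, hj, hval⟩ := vmax_spec u
  exact le_antisymm (le_vmax u i) (hval ▸ h j)

lemma lt_vmax_of_notMem {k : ℕ} {u : Fin (k+1) → ℝ} {i : Fin (k+1)} (h : i ∉ suppmax u) :
    u i < vmax u := by
  rcases lt_or_eq_of_le (le_vmax u i) with hlt | heq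
  · exact hlt
  · exact absurd (fun j => heq ▸ le_vmax u j) h

lemma vmaxOn_eq {k : ℕ} {S : Set (Fin k)} {b : Fin k → ℝ} {i0 : Fin k}
    (hi0 : i0 ∈ S) (hub : ∀ j ∈ S, b j ≤ b i0) (h0 : 0 ≤ b i0) : vmaxOn S b = b i0 := by
  haveI : Nonempty (Fin k) := ⟨i0⟩
  unfold vmaxOn
  apply le_antisymm
  · refine ciSup_le fun i => ?_
    by_cases hi : i ∈ S
    · haveI : Nonempty (i ∈ S) := ⟨hi⟩
      rw [ciSup_const]
      exact hub i hi
    · haveI : IsEmpty (i ∈ S) := ⟨fun h => hi h⟩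
      rw [Real.iSup_of_isEmpty]; exact h0
  · haveI : Nonempty (i0 ∈ S) := ⟨hi0⟩
    calc b i0 = ⨆ _ : i0 ∈ S, b i0 := ciSup_const.symm
      _ ≤ ⨆ i, ⨆ _ : i ∈ S, b i :=
        le_ciSup (f := fun i => ⨆ _ : i ∈ S, b i) (bddAboveRange _) i0

lemma eventually_vmax {k : ℕ} (a b : Fin (k+1) → ℝ) {c : ℝ} {i0 : Fin (k+1)}
    (hi0 : i0 ∈ suppmax a) (hbi0 : b i0 = c) (hub : ∀ i ∈ suppmax a, b i ≤ c) :
    ∀ᶠ θ in nhdsWithin (0:ℝ) (Set.Ioi 0),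
      vmax (fun i => a i + θ * b i) = vmax a + θ * c := by
  have hA : ∀ i, ∀ᶠ θ in nhdsWithin (0:ℝ) (Set.Ioi 0),
      a i + θ * b i ≤ vmax a + θ * c := by
    intro i
    by_cases hi : i ∈ suppmax a
    · filter_upwards [self_mem_nhdsWithin] with θ hθ
      have h1 : θ * b i ≤ θ * c :=
        mul_le_mul_of_nonneg_left (hub i hi) (le_of_lt hθ)
      have h2 := suppmax_eq_vmax hi
      linarith
    · have hlt : a i < vmax a := lt_vmax_of_notMem hi
      have hcont : Filter.Tendsto (fun θ : ℝ => a i + θ * b i - (vmax a + θ * c))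
          (nhds 0) (nhds (a i - vmax a)) := by
        have : Continuous fun θ : ℝ => a i + θ * b i - (vmax a + θ * c) := by continuity
        simpa using this.tendsto 0
      have hev := hcont.eventually_lt_const (show a i - vmax a < 0 by linarith)
      filter_upwards [nhdsWithin_le_nhds hev] with θ hθ
      linarith
  filter_upwards [(Filter.eventually_all).2 hA] with θ hθ
  refine le_antisymm (ciSup_le hθ) ?_
  have : vmax a + θ * c = a i0 + θ * b i0 := by rw [hbi0, suppmax_eq_vmax hi0]
  rw [this]
  exact le_vmax (fun i => a i + θ * b i) i0

lemma hasPosDeriv_main {k : ℕ} (a b : Fin (k+1) → ℝ) {c : ℝ} {i0 : Fin (k+1)}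
    (hi0 : i0 ∈ suppmax a) (hbi0 : b i0 = c) (hub : ∀ i ∈ suppmax a, b i ≤ c)
    (g0 L Q : ℝ) :
    HasPosDeriv (fun θ : ℝ => vmax (fun i => a i + θ * b i) - (g0 + θ * L + θ^2 * Q))
      (c - L) := by
  unfold HasPosDeriv
  have h0 : (fun i => a i + (0:ℝ) * b i) = a := by funext i; ring
  have htend : Filter.Tendsto (fun θ : ℝ => c - L - θ * Q)
      (nhdsWithin (0:ℝ) (Set.Ioi 0)) (nhds (c - L)) := by
    have hcont : Continuous fun θ : ℝ => c - L - θ * Q := by continuity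
    have := (hcont.tendsto 0).mono_left
      (nhdsWithin_le_nhds : nhdsWithin (0:ℝ) (Set.Ioi 0) ≤ nhds 0)
    simpa using this
  refine htend.congr' ?_
  filter_upwards [eventually_vmax a b hi0 hbi0 hub, self_mem_nhdsWithin] with θ hθ hpos
  simp only [hθ, h0]
  have hne : θ ≠ 0 := ne_of_gt hpos
  field_simp
  ring

end Aux

/-- explicit values of the scaled directional derivatives of `f_R`, `f_C`
and (when `f_R(x,y) = f_C(x,y)`) of `f`. -/
theorem stmt17 {m n : ℕ} (R C : Matrix (Fin (m+1)) (Fin (n+1)) ℝ)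
    (hR : ∀ i j, R i j ∈ Set.Icc (0:ℝ) 1) (hC : ∀ i j, C i j ∈ Set.Icc (0:ℝ) 1)
    (x : Fin (m+1) → ℝ) (y : Fin (n+1) → ℝ) (x' : Fin (m+1) → ℝ) (y' : Fin (n+1) → ℝ)
    (hx : x ∈ Δ (m+1)) (hy : y ∈ Δ (n+1)) (hx' : x' ∈ Δ (m+1)) (hy' : y' ∈ Δ (n+1)) :
    HasPosDeriv (fun θ : ℝ => fR R (x + θ • (x' - x)) (y + θ • (y' - y)))
      (vmaxOn (SR R y) (R.mulVec y') - x' ⬝ᵥ R.mulVec y - x ⬝ᵥ R.mulVec y'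
        + x ⬝ᵥ R.mulVec y - fR R x y) ∧
    HasPosDeriv (fun θ : ℝ => fC C (x + θ • (x' - x)) (y + θ • (y' - y)))
      (vmaxOn (SC C x) (Matrix.vecMul x' C) - x' ⬝ᵥ C.mulVec y - x ⬝ᵥ C.mulVec y'
        + x ⬝ᵥ C.mulVec y - fC C x y) ∧
    (fR R x y = fC C x y →
      HasPosDeriv (fun θ : ℝ => fNE R C (x + θ • (x' - x)) (y + θ • (y' - y)))
        (max
          (vmaxOn (SR R y) (R.mulVec y') - x' ⬝ᵥ R.mulVec y - x ⬝ᵥ R.mulVec y'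
            + x ⬝ᵥ R.mulVec y - fR R x y)
          (vmaxOn (SC C x) (Matrix.vecMul x' C) - x' ⬝ᵥ C.mulVec y - x ⬝ᵥ C.mulVec y'
            + x ⬝ᵥ C.mulVec y - fC C x y))) := by
  have partR : HasPosDeriv (fun θ : ℝ => fR R (x + θ • (x' - x)) (y + θ • (y' - y)))
      (vmaxOn (SR R y) (R.mulVec y') - x' ⬝ᵥ R.mulVec y - x ⬝ᵥ R.mulVec y'
        + x ⬝ᵥ R.mulVec y - fR R x y) := by
    set a : Fin (m+1) → ℝ := R.mulVec y with ha
    set b : Fin (m+1) → ℝ := R.mulVec (y' - y) with hb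
    obtain ⟨j, hj, -⟩ := vmax_spec a
    obtain ⟨i0, hi0S, hi0max⟩ := Set.exists_max_image (suppmax a) (R.mulVec y')
      (Set.toFinite _) ⟨j, hj⟩
    have hnn : 0 ≤ R.mulVec y' i0 := by
      simp only [Matrix.mulVec, dotProduct]
      exact Finset.sum_nonneg fun j _ => mul_nonneg (hR i0 j).1 (hy'.1 j)
    have hvOn : vmaxOn (SR R y) (R.mulVec y') = R.mulVec y' i0 :=
      vmaxOn_eq hi0S hi0max hnn
    set c : ℝ := vmaxOn (SR R y) (R.mulVec y') - vmax a with hc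
    have hbi : ∀ i, b i = R.mulVec y' i - a i := by
      intro i; rw [hb, Matrix.mulVec_sub]; simp [ha]
    have hbi0 : b i0 = c := by
      rw [hbi]; linarith [hvOn, suppmax_eq_vmax hi0S, hc]
    have hub : ∀ i ∈ suppmax a, b i ≤ c := by
      intro i hi
      rw [hbi]
      linarith [hi0max i hi, suppmax_eq_vmax hi, hvOn, hc]
    have key := hasPosDeriv_main a b hi0S hbi0 hub
      (x ⬝ᵥ R.mulVec y)
      ((x' - x) ⬝ᵥ R.mulVec y + x ⬝ᵥ R.mulVec (y' - y))
      ((x' - x) ⬝ᵥ R.mulVec (y' - y))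
    have heq : (fun θ : ℝ => fR R (x + θ • (x' - x)) (y + θ • (y' - y)))
        = fun θ : ℝ => vmax (fun i => a i + θ * b i)
            - (x ⬝ᵥ R.mulVec y
               + θ * ((x' - x) ⬝ᵥ R.mulVec y + x ⬝ᵥ R.mulVec (y' - y))
               + θ^2 * ((x' - x) ⬝ᵥ R.mulVec (y' - y))) := by
      funext θ
      unfold fR
      have h2 : (x + θ • (x' - x)) ⬝ᵥ R.mulVec (y + θ • (y' - y))
          = x ⬝ᵥ R.mulVec y
            + θ * ((x' - x) ⬝ᵥ R.mulVec y + x ⬝ᵥ R.mulVec (y' - y))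
            + θ^2 * ((x' - x) ⬝ᵥ R.mulVec (y' - y)) := by
        simp [Matrix.mulVec_add, Matrix.mulVec_smul, add_dotProduct,
          dotProduct_add, smul_dotProduct, dotProduct_smul,
          smul_eq_mul]
        ring
      have h1 : R.mulVec (y + θ • (y' - y)) = fun i => a i + θ * b i := by
        funext i
        simp [ha, hb, Matrix.mulVec_add, Matrix.mulVec_smul]
      rw [h2, h1]
    rw [heq]
    have hd : vmaxOn (SR R y) (R.mulVec y') - x' ⬝ᵥ R.mulVec y - x ⬝ᵥ R.mulVec y'
        + x ⬝ᵥ R.mulVec y - fR R x y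
        = c - ((x' - x) ⬝ᵥ R.mulVec y + x ⬝ᵥ R.mulVec (y' - y)) := by
      rw [hc]
      unfold fR
      simp only [sub_dotProduct, dotProduct_sub, Matrix.mulVec_sub, ha]
      ring
    rw [hd]
    exact key
  have partC : HasPosDeriv (fun θ : ℝ => fC C (x + θ • (x' - x)) (y + θ • (y' - y)))
      (vmaxOn (SC C x) (Matrix.vecMul x' C) - x' ⬝ᵥ C.mulVec y - x ⬝ᵥ C.mulVec y'
        + x ⬝ᵥ C.mulVec y - fC C x y) := by
    set a : Fin (n+1) → ℝ := Matrix.vecMul x C with ha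
    set b : Fin (n+1) → ℝ := Matrix.vecMul (x' - x) C with hb
    obtain ⟨j, hj, -⟩ := vmax_spec a
    obtain ⟨i0, hi0S, hi0max⟩ := Set.exists_max_image (suppmax a) (Matrix.vecMul x' C)
      (Set.toFinite _) ⟨j, hj⟩
    have hnn : 0 ≤ Matrix.vecMul x' C i0 := by
      simp only [Matrix.vecMul, dotProduct]
      exact Finset.sum_nonneg fun i _ => mul_nonneg (hx'.1 i) (hC i i0).1
    have hvOn : vmaxOn (SC C x) (Matrix.vecMul x' C) = Matrix.vecMul x' C i0 :=
      vmaxOn_eq hi0S hi0max hnn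
    set c : ℝ := vmaxOn (SC C x) (Matrix.vecMul x' C) - vmax a with hc
    have hbi : ∀ i, b i = Matrix.vecMul x' C i - a i := by
      intro i; rw [hb, Matrix.sub_vecMul]; simp [ha]
    have hbi0 : b i0 = c := by
      rw [hbi]; linarith [hvOn, suppmax_eq_vmax hi0S, hc]
    have hub : ∀ i ∈ suppmax a, b i ≤ c := by
      intro i hi
      rw [hbi]
      linarith [hi0max i hi, suppmax_eq_vmax hi, hvOn, hc]
    have key := hasPosDeriv_main a b hi0S hbi0 hub
      (x ⬝ᵥ C.mulVec y)
      ((x' - x) ⬝ᵥ C.mulVec y + x ⬝ᵥ C.mulVec (y' - y))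
      ((x' - x) ⬝ᵥ C.mulVec (y' - y))
    have heq : (fun θ : ℝ => fC C (x + θ • (x' - x)) (y + θ • (y' - y)))
        = fun θ : ℝ => vmax (fun i => a i + θ * b i)
            - (x ⬝ᵥ C.mulVec y
               + θ * ((x' - x) ⬝ᵥ C.mulVec y + x ⬝ᵥ C.mulVec (y' - y))
               + θ^2 * ((x' - x) ⬝ᵥ C.mulVec (y' - y))) := by
      funext θ
      unfold fC
      have h2 : (x + θ • (x' - x)) ⬝ᵥ C.mulVec (y + θ • (y' - y))
          = x ⬝ᵥ C.mulVec y
            + θ * ((x' - x) ⬝ᵥ C.mulVec y + x ⬝ᵥ C.mulVec (y' - y))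
            + θ^2 * ((x' - x) ⬝ᵥ C.mulVec (y' - y)) := by
        simp [Matrix.mulVec_add, Matrix.mulVec_smul, add_dotProduct,
          dotProduct_add, smul_dotProduct, dotProduct_smul,
          smul_eq_mul]
        ring
      have h1 : Matrix.vecMul (x + θ • (x' - x)) C = fun i => a i + θ * b i := by
        funext i
        simp [ha, hb, Matrix.add_vecMul, Matrix.smul_vecMul]
      rw [h2, h1]
    rw [heq]
    have hd : vmaxOn (SC C x) (Matrix.vecMul x' C) - x' ⬝ᵥ C.mulVec y - x ⬝ᵥ C.mulVec y'
        + x ⬝ᵥ C.mulVec y - fC C x y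
        = c - ((x' - x) ⬝ᵥ C.mulVec y + x ⬝ᵥ C.mulVec (y' - y)) := by
      rw [hc]
      unfold fC
      simp only [sub_dotProduct, dotProduct_sub, Matrix.mulVec_sub, ha]
      ring
    rw [hd]
    exact key
  refine ⟨partR, partC, fun hEq => ?_⟩
  unfold HasPosDeriv at partR partC ⊢
  refine (partR.max partC).congr' ?_
  filter_upwards [self_mem_nhdsWithin] with θ hθ
  simp only [fNE, zero_smul, add_zero]
  rw [← hEq, max_self]
  have hmax : max (fR R (x + θ • (x' - x)) (y + θ • (y' - y)))
        (fC C (x + θ • (x' - x)) (y + θ • (y' - y))) - fR R x y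
      = max (fR R (x + θ • (x' - x)) (y + θ • (y' - y)) - fR R x y)
        (fC C (x + θ • (x' - x)) (y + θ • (y' - y)) - fR R x y) :=
    (max_sub_sub_right _ _ _).symm
  rw [hmax, ← max_div_div_right (le_of_lt hθ)]

end TS
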